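/- Let C be a set of cluster centers such that every vertex of G is within distance D^B_opt of some center (in G), and let u be any vertex. Let G'_B be a B-augmentation of G such that the height of SPT(G'_B, C, u) equals the height of the minimum-height B-budget shortest path tree MH_B-SPT(G,C,u). Then the diameter of G'_B is at most 4·D^B_opt. -/

import Mathlib

open scoped ENNReal

open scoped ENNReal

noncomputable def walkWeight {V : Type*} {G : SimpleGraph V} (w : V → V → ℝ≥0∞) {u v : V}
    (p : G.Walk u v) : ℝ≥0∞ :=
  (p.darts.map fun d => w d.toProd.1 d.toProd.2).sum

noncomputable def wdist {V : Type*} (G : SimpleGraph V) (w : V → V → ℝ≥0∞) (u v : V) : ℝ≥0∞ :=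
  ⨅ p : G.Walk u v, walkWeight w p

noncomputable def wdiam {V : Type*} (G : SimpleGraph V) (w : V → V → ℝ≥0∞) : ℝ≥0∞ :=
  ⨆ x, ⨆ y, wdist G w x y

def IsAug {V : Type*} (G : SimpleGraph V) (cst : Sym2 V → ℕ) (B : ℕ)
    (G' : SimpleGraph V) : Prop :=
  ∃ F : Finset (Sym2 V), (∀ e ∈ F, e ∉ G.edgeSet ∧ ¬ e.IsDiag) ∧
    (∑ e ∈ F, cst e) ≤ B ∧ G' = G ⊔ SimpleGraph.fromEdgeSet ↑F

/-- `T` is a shortest path tree of `G'`, `C` and root `u`: a tree (as a subgraph of `G'`)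
containing `u` and `C` in which the distance from `u` to each `c ∈ C` equals the
distance in `G'`. -/
structure IsSPT {V : Type*} (G' : SimpleGraph V) (w : V → V → ℝ≥0∞) (C : Set V) (u : V)
    (T : G'.Subgraph) : Prop where
  u_mem : u ∈ T.verts
  C_sub : C ⊆ T.verts
  tree : T.coe.IsTree
  dist_eq : ∀ x, ∀ hx : x ∈ C,
    wdist T.coe (fun a b => w a.1 b.1) ⟨u, u_mem⟩ ⟨x, C_sub hx⟩ = wdist G' w u x

/-- The height of a rooted weighted tree: the maximum weight of a path from the root. -/
noncomputable def sptHeight {V : Type*} (G' : SimpleGraph V) (w : V → V → ℝ≥0∞)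
    (T : G'.Subgraph) (u : V) (hu : u ∈ T.verts) : ℝ≥0∞ :=
  ⨆ x : T.verts, wdist T.coe (fun a b => w a.1 b.1) ⟨u, hu⟩ x

/-- The height of a Minimum Height_B SPT of `G`, `C` and `u`: the minimum height of a
shortest path tree of `G_B`, `C`, `u` over all `B`-augmentations `G_B` of `G`. -/
noncomputable def gammaH {V : Type*} (G : SimpleGraph V) (w : V → V → ℝ≥0∞)
    (cst : Sym2 V → ℕ) (B : ℕ) (C : Set V) (u : V) : ℝ≥0∞ :=
  ⨅ (G' : SimpleGraph V) (_ : IsAug G cst B G') (T : G'.Subgraph)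
    (h : IsSPT G' w C u T), sptHeight G' w T u h.u_mem


/-! In every `B`-augmentation of finite diameter, the shortest path tree obtained by joining each
vertex to its predecessor on a shortest walk from `u` has height at most that diameter. Hence the
minimum height of a `B`-budget SPT is at most `D^B_opt`, and so is the distance in `G'_B` from `u`
to every center. By the covering hypothesis every vertex is then within `2·D^B_opt` of `u`, so any
two are within `4·D^B_opt`. -/

open SimpleGraph

section WalkWeight

variable {V : Type*} {G : SimpleGraph V} (w : V → V → ℝ≥0∞)

@[simp]
lemma walkWeight_nil {u : V} : walkWeight w (Walk.nil : G.Walk u u) = 0 := rfl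

@[simp]
lemma walkWeight_cons {a b c : V} (h : G.Adj a b) (p : G.Walk b c) :
    walkWeight w (Walk.cons h p) = w a b + walkWeight w p := by
  simp [walkWeight]

lemma walkWeight_append {a b c : V} (p : G.Walk a b) (q : G.Walk b c) :
    walkWeight w (p.append q) = walkWeight w p + walkWeight w q := by
  simp [walkWeight, Walk.darts_append]

lemma walkWeight_concat {a b c : V} (p : G.Walk a b) (h : G.Adj b c) :
    walkWeight w (p.concat h) = walkWeight w p + w b c := by
  simp [Walk.concat_eq_append, walkWeight_append]

lemma walkWeight_reverse (hw : ∀ x y, w x y = w y x) {a b : V} (p : G.Walk a b) :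
    walkWeight w p.reverse = walkWeight w p := by
  induction p with
  | nil => rfl
  | cons h p ih =>
    rw [Walk.reverse_cons, walkWeight_append, ih, walkWeight_cons, walkWeight_cons,
      walkWeight_nil, add_zero, hw, add_comm]

lemma walkWeight_map {W : Type*} {H : SimpleGraph W} (f : G →g H) (w' : W → W → ℝ≥0∞)
    (hf : ∀ a b, G.Adj a b → w a b = w' (f a) (f b)) {a b : V} (p : G.Walk a b) :
    walkWeight w' (p.map f) = walkWeight w p := by
  induction p with
  | nil => rfl
  | cons h p ih => rw [Walk.map_cons, walkWeight_cons, walkWeight_cons, ih, hf _ _ h]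

lemma walkWeight_bypass_le [DecidableEq V] {a b : V} (p : G.Walk a b) :
    walkWeight w p.bypass ≤ walkWeight w p := by
  obtain ⟨l, hperm, hsub⟩ := (Walk.darts_nodup_of_support_nodup
    p.bypass_isPath.support_nodup).subperm p.darts_bypass_subset_darts
  calc walkWeight w p.bypass = (l.map fun d => w d.toProd.1 d.toProd.2).sum :=
        (hperm.map _).sum_eq.symm
    _ ≤ walkWeight w p := (hsub.map _).sum_le_sum fun _ _ => zero_le

end WalkWeight

section WDist

variable {V : Type*} {G : SimpleGraph V} (w : V → V → ℝ≥0∞)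

lemma wdist_le_walkWeight {a b : V} (p : G.Walk a b) : wdist G w a b ≤ walkWeight w p :=
  iInf_le _ p

lemma wdist_le_of_adj {a b : V} (h : G.Adj a b) : wdist G w a b ≤ w a b := by
  simpa using wdist_le_walkWeight w (Walk.cons h Walk.nil)

@[simp]
lemma wdist_self (a : V) : wdist G w a a = 0 :=
  nonpos_iff_eq_zero.mp (wdist_le_walkWeight w Walk.nil)

lemma wdist_triangle (a b c : V) : wdist G w a c ≤ wdist G w a b + wdist G w b c := by
  simp only [wdist, ENNReal.iInf_add, ENNReal.add_iInf]
  exact le_iInf₂ fun q p => (wdist_le_walkWeight w (p.append q)).trans_eq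
    (walkWeight_append w p q)

lemma wdist_comm (hw : ∀ x y, w x y = w y x) (a b : V) : wdist G w a b = wdist G w b a :=
  le_antisymm
    (le_iInf fun p => (wdist_le_walkWeight w p.reverse).trans_eq (walkWeight_reverse w hw p))
    (le_iInf fun p => (wdist_le_walkWeight w p.reverse).trans_eq (walkWeight_reverse w hw p))

lemma wdist_map_le {W : Type*} {H : SimpleGraph W} (f : G →g H) (w' : W → W → ℝ≥0∞)
    (hf : ∀ a b, G.Adj a b → w a b = w' (f a) (f b)) (a b : V) :
    wdist H w' (f a) (f b) ≤ wdist G w a b :=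
  le_iInf fun p => (wdist_le_walkWeight w' (p.map f)).trans_eq (walkWeight_map w f w' hf p)

lemma wdist_anti {G' : SimpleGraph V} (h : G ≤ G') (a b : V) :
    wdist G' w a b ≤ wdist G w a b :=
  wdist_map_le w (Hom.ofLE h) w (fun _ _ _ => rfl) a b

lemma wdist_le_wdiam (a b : V) : wdist G w a b ≤ wdiam G w :=
  le_iSup₂ (f := fun x y => wdist G w x y) a b

lemma wdiam_le_two_mul (hw : ∀ x y, w x y = w y x) {u : V} {r : ℝ≥0∞}
    (hr : ∀ x, wdist G w u x ≤ r) : wdiam G w ≤ 2 * r :=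
  iSup₂_le fun x y => calc
    wdist G w x y ≤ wdist G w x u + wdist G w u y := wdist_triangle w x u y
    _ ≤ r + r := add_le_add (wdist_comm w hw x u ▸ hr x) (hr y)
    _ = 2 * r := (two_mul r).symm

lemma reachable_of_wdist_ne_top {a b : V} (h : wdist G w a b ≠ ⊤) : G.Reachable a b := by
  by_contra hne
  exact h (@iInf_of_empty _ _ _ (not_nonempty_iff.mp hne) _)

lemma exists_walkWeight_eq_wdist [Finite V] {a b : V} (h : G.Reachable a b) :
    ∃ p : G.Walk a b, walkWeight w p = wdist G w a b := by
  classical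
  have := Fintype.ofFinite V
  obtain ⟨p, -, hp⟩ := Finset.exists_min_image Finset.univ (fun p : G.Path a b => walkWeight w p.1)
    ⟨h.some.toPath, Finset.mem_univ _⟩
  refine ⟨p.1, le_antisymm (le_iInf fun q => ?_) (wdist_le_walkWeight w p.1)⟩
  exact (hp q.toPath (Finset.mem_univ _)).trans (walkWeight_bypass_le w q)

lemma exists_shortest_walk_length_min [Finite V] {a b : V} (h : G.Reachable a b) :
    ∃ p : G.Walk a b, walkWeight w p = wdist G w a b ∧
      ∀ q : G.Walk a b, walkWeight w q = wdist G w a b → p.length ≤ q.length := by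
  classical
  have hex : ∃ n, ∃ p : G.Walk a b, p.length = n ∧ walkWeight w p = wdist G w a b :=
    let ⟨p, hp⟩ := exists_walkWeight_eq_wdist w h; ⟨_, p, rfl, hp⟩
  obtain ⟨p, hlen, hp⟩ := Nat.find_spec hex
  exact ⟨p, hp, fun q hq => hlen ▸ Nat.find_min' hex ⟨q, rfl, hq⟩⟩

end WDist

section ParentGraph

variable {V : Type*}

def parentGraph (u : V) (par : V → V) : SimpleGraph V :=
  SimpleGraph.fromRel fun a b => b ≠ u ∧ a = par b

variable {u : V} {par : V → V} {rank : V → ℕ}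

lemma parentGraph_adj_par (hrank : ∀ v, v ≠ u → rank (par v) < rank v) {v : V} (hv : v ≠ u) :
    (parentGraph u par).Adj (par v) v :=
  ⟨fun h => (hrank v hv).ne (congrArg rank h), Or.inl ⟨hv, rfl⟩⟩

lemma parentGraph_le {G : SimpleGraph V} (hadj : ∀ v, v ≠ u → G.Adj (par v) v) :
    parentGraph u par ≤ G := by
  rintro a b ⟨-, ⟨hb, rfl⟩ | ⟨ha, rfl⟩⟩
  exacts [hadj b hb, (hadj a ha).symm]

lemma parentGraph_reachable (hrank : ∀ v, v ≠ u → rank (par v) < rank v) (v : V) :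
    (parentGraph u par).Reachable u v := by
  induction v using (measure rank).wf.induction with
  | _ v ih =>
    by_cases hv : v = u
    · rw [hv]
    · exact (ih (par v) (hrank v hv)).trans (parentGraph_adj_par hrank hv).reachable

lemma parentGraph_isTree [Finite V] (hrank : ∀ v, v ≠ u → rank (par v) < rank v) :
    (parentGraph u par).IsTree := by
  -- a connected graph with exactly one edge `par v — v` per non-root vertex `v` is a tree
  refine isTree_iff_connected_and_card.mpr
    ⟨(connected_iff_exists_forall_reachable _).mpr ⟨u, parentGraph_reachable hrank⟩, ?_⟩
  let e : {v // v ≠ u} → (parentGraph u par).edgeSet := fun v =>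
    ⟨s(par v, v), parentGraph_adj_par hrank v.2⟩
  have he : Function.Bijective e := by
    constructor
    · rintro ⟨a, ha⟩ ⟨b, hb⟩ hab
      rcases Sym2.eq_iff.mp (congrArg Subtype.val hab) with ⟨-, h⟩ | ⟨h₁, h₂⟩
      · exact Subtype.ext h
      · have hba : rank (par a) < rank a := hrank a ha
        have hab : rank (par b) < rank b := hrank b hb
        dsimp only at h₁ h₂
        rw [h₁] at hba
        rw [← h₂] at hab
        omega
    · rintro ⟨e', he'⟩
      induction e' using Sym2.ind with
      | _ a b =>
        obtain ⟨-, ⟨hb, hab⟩ | ⟨ha, hba⟩⟩ := he'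
        · exact ⟨⟨b, hb⟩, Subtype.ext (show s(par b, b) = s(a, b) from hab ▸ rfl)⟩
        · exact ⟨⟨a, ha⟩, Subtype.ext (show s(par a, a) = s(a, b) from hba ▸ Sym2.eq_swap)⟩
  classical
  rw [← Nat.card_eq_of_bijective e he, ← Finite.card_option]
  exact Nat.card_congr (Equiv.optionSubtypeNe u)

variable {G : SimpleGraph V} (w : V → V → ℝ≥0∞)

lemma wdist_parentGraph (hadj : ∀ v, v ≠ u → G.Adj (par v) v)
    (hrank : ∀ v, v ≠ u → rank (par v) < rank v)
    (hdist : ∀ v, v ≠ u → wdist G w u v = wdist G w u (par v) + w (par v) v) (v : V) :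
    wdist (parentGraph u par) w u v = wdist G w u v := by
  refine le_antisymm ?_ (wdist_anti w (parentGraph_le hadj) u v)
  induction v using (measure rank).wf.induction with
  | _ v ih =>
    by_cases hv : v = u
    · simp [hv]
    · calc wdist (parentGraph u par) w u v
          ≤ wdist (parentGraph u par) w u (par v) + wdist (parentGraph u par) w (par v) v :=
            wdist_triangle w _ _ _
        _ ≤ wdist G w u (par v) + w (par v) v :=
            add_le_add (ih _ (hrank v hv)) (wdist_le_of_adj w (parentGraph_adj_par hrank hv))
        _ = wdist G w u v := (hdist v hv).symm

end ParentGraph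

section ShortestPathTree

variable {V : Type*} {G : SimpleGraph V} (w : V → V → ℝ≥0∞) {u : V}

/-- Each `v ≠ u` gets as parent the penultimate vertex of a shortest `u`-`v` walk with the fewest
edges; the length of that walk strictly decreases along parents. -/
lemma exists_shortest_path_parent [Finite V] (hfin : ∀ v, wdist G w u v ≠ ⊤) :
    ∃ (par : V → V) (rank : V → ℕ), ∀ v, v ≠ u → G.Adj (par v) v ∧
      wdist G w u v = wdist G w u (par v) + w (par v) v ∧ rank (par v) < rank v := by
  choose p hp hmin using fun v =>
    exists_shortest_walk_length_min w (reachable_of_wdist_ne_top w (hfin v))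
  refine ⟨fun v => (p v).penultimate, fun v => (p v).length, fun v hv => ?_⟩
  have hnil : ¬(p v).Nil := Walk.not_nil_of_ne (Ne.symm hv)
  set x := (p v).penultimate
  have hadj : G.Adj x v := Walk.adj_penultimate hnil
  have hsplit : wdist G w u v = walkWeight w (p v).dropLast + w x v := by
    rw [← hp, ← walkWeight_concat w _ hadj, Walk.concat_dropLast]
  have hdist : wdist G w u v = wdist G w u x + w x v :=
    le_antisymm ((wdist_triangle w u x v).trans (by gcongr; exact wdist_le_of_adj w hadj))
      (hsplit ▸ by gcongr; exact wdist_le_walkWeight w _)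
  have hprefix : walkWeight w (p v).dropLast = wdist G w u x :=
    (ENNReal.add_left_inj (ENNReal.add_ne_top.mp (hdist ▸ hfin v)).2).mp
      (hsplit.symm.trans hdist)
  refine ⟨hadj, hdist, ?_⟩
  calc (p x).length ≤ (p v).dropLast.length := hmin x _ hprefix
    _ < (p v).length := Walk.length_dropLast_add_one hnil ▸ Nat.lt_succ_self _

lemma wdist_toSubgraph_coe {H : SimpleGraph V} (hH : H ≤ G) (a b : V) :
    wdist (SimpleGraph.toSubgraph H hH).coe (fun x y => w x.1 y.1)
      ⟨a, Set.mem_univ a⟩ ⟨b, Set.mem_univ b⟩ = wdist H w a b :=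
  le_antisymm
    (wdist_map_le w (Subgraph.spanningCoeEquivCoeOfSpanning _ (toSubgraph.isSpanning H hH)).toHom
      _ (fun _ _ _ => rfl) a b)
    (wdist_map_le _ (Subgraph.coeEmbeddingSpanningCoe _).toHom w (fun _ _ _ => rfl) _ _)

lemma exists_isSPT_sptHeight_le_wdiam [Finite V] (C : Set V) (hfin : ∀ v, wdist G w u v ≠ ⊤) :
    ∃ (T : G.Subgraph) (hT : IsSPT G w C u T), sptHeight G w T u hT.u_mem ≤ wdiam G w := by
  obtain ⟨par, rank, hpar⟩ := exists_shortest_path_parent w hfin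
  choose hadj hdist hrank using hpar
  let T := SimpleGraph.toSubgraph (parentGraph u par) (parentGraph_le hadj)
  have hT : ∀ v, wdist T.coe (fun x y => w x.1 y.1) ⟨u, Set.mem_univ u⟩ ⟨v, Set.mem_univ v⟩ =
      wdist G w u v := fun v =>
    (wdist_toSubgraph_coe w _ u v).trans (wdist_parentGraph w hadj hrank hdist v)
  have hspt : IsSPT G w C u T :=
    { u_mem := Set.mem_univ u
      C_sub := fun _ _ => Set.mem_univ _
      tree := (Subgraph.spanningCoeEquivCoeOfSpanning T (toSubgraph.isSpanning _ _)).isTree_iff.mp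
        (parentGraph_isTree hrank)
      dist_eq := fun x _ => hT x }
  exact ⟨T, hspt, iSup_le fun x => (hT x).trans_le (wdist_le_wdiam w u x)⟩

lemma gammaH_le_wdiam [Finite V] {G' : SimpleGraph V} (cst : Sym2 V → ℕ) (B : ℕ) (C : Set V)
    (hG' : IsAug G cst B G') : gammaH G w cst B C u ≤ wdiam G' w := by
  by_cases htop : wdiam G' w = ⊤
  · exact htop ▸ le_top
  obtain ⟨T, hT, hheight⟩ := exists_isSPT_sptHeight_le_wdiam w C fun v =>
    ne_top_of_le_ne_top htop (wdist_le_wdiam w u v)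
  exact (iInf₂_le_of_le G' hG' (iInf₂_le T hT)).trans hheight

lemma IsAug.le {G' : SimpleGraph V} {cst : Sym2 V → ℕ} {B : ℕ} (h : IsAug G cst B G') :
    G ≤ G' := by
  obtain ⟨F, -, -, rfl⟩ := h
  exact le_sup_left

end ShortestPathTree

/-- If every vertex is within `D^B_opt` of a center of `C` in `G`, and `G'_B` is a
`B`-augmentation admitting an SPT of `C` rooted at `u` whose height equals that of a
minimum-height `B`-budget SPT, then the diameter of `G'_B` is at most `4·D^B_opt`. -/
theorem stmt10 {V : Type*} [Fintype V] (G : SimpleGraph V) (w : V → V → ℝ≥0∞)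
    (hw : ∀ x y, w x y = w y x) (cst : Sym2 V → ℕ) (B : ℕ) (C : Set V) (u : V)
    (Dopt : ℝ≥0∞)
    (hDopt : Dopt = ⨅ (G' : SimpleGraph V) (_ : IsAug G cst B G'), wdiam G' w)
    (hcov : ∀ v : V, ∃ ct ∈ C, wdist G w v ct ≤ Dopt)
    (G'B : SimpleGraph V) (haug : IsAug G cst B G'B)
    (T : G'B.Subgraph) (hT : IsSPT G'B w C u T)
    (hmin : sptHeight G'B w T u hT.u_mem = gammaH G w cst B C u) :
    wdiam G'B w ≤ 4 * Dopt := by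
  have hcenter : ∀ c ∈ C, wdist G'B w u c ≤ Dopt := fun c hc => calc
    wdist G'B w u c = wdist T.coe (fun a b => w a.1 b.1) ⟨u, hT.u_mem⟩ ⟨c, hT.C_sub hc⟩ :=
      (hT.dist_eq c hc).symm
    _ ≤ sptHeight G'B w T u hT.u_mem := le_iSup (fun x : T.verts => _) _
    _ = gammaH G w cst B C u := hmin
    _ ≤ Dopt := hDopt ▸ le_iInf₂ fun _ hG' => gammaH_le_wdiam w cst B C hG'
  have hradius : ∀ v, wdist G'B w u v ≤ 2 * Dopt := fun v => by
    obtain ⟨c, hc, hvc⟩ := hcov v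
    calc wdist G'B w u v ≤ wdist G'B w u c + wdist G'B w c v := wdist_triangle w u c v
      _ ≤ Dopt + Dopt := add_le_add (hcenter c hc)
          (wdist_comm w hw c v ▸ (wdist_anti w haug.le v c).trans hvc)
      _ = 2 * Dopt := (two_mul Dopt).symm
  calc wdiam G'B w ≤ 2 * (2 * Dopt) := wdiam_le_two_mul w hw hradius
    _ = 4 * Dopt := by ring
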